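/- For every 0 < ζ < 1/2, the solution of (nps) with initial condition p(0) = ζ, q(0) = 0 is periodic with minimal period T(ζ) = (8/μ) K(2ζ), where K is the complete elliptic integral of the first kind. -/

import Mathlib

/-! The substitution `u = μt/2`, `q = (μ/σ) Q` reduces (nps) to its case `μ = σ = 2`, which is
solved by `P = (k/2) cn/dn`, `Q = k sn` with `k = 2ζ`; here `sn`, `cn`, `dn` are Jacobi's elliptic
functions of modulus `k`, obtained from the amplitude `am = F(·, k)⁻¹` as `sin ∘ am`, `cos ∘ am`
and `√(1 - k² sn²)`. Because the integrand of `F(·, k)` is `π`-periodic and symmetric about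
`π/2`, `am (u + 2K) = am u + π`, so `sn` and `cn` change sign and `dn` is unchanged under
`u ↦ u + 2K`: the orbit closes after `4K`. Conversely, returning to `(ζ, 0)` at time `u > 0`
forces `cn u = 1`, i.e. `am u ∈ 2πℤ`, hence `u ≥ F(2π, k) = 4K`. -/

open Real Filter Function intervalIntegral

/-- (p, q) is a solution of the autonomous system (nps):
ṗ = −(σ/4)q + σqp², q̇ = (μ²/σ)p − σpq². -/
def IsNpsSolution (μ σ : ℝ) (p q : ℝ → ℝ) : Prop :=
  ∀ t : ℝ,
    HasDerivAt p (-(σ / 4) * q t + σ * q t * (p t) ^ 2) t ∧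
    HasDerivAt q ((μ ^ 2 / σ) * p t - σ * p t * (q t) ^ 2) t

/-- τ is the minimal period of the pair (p, q). -/
def IsMinimalPeriod (p q : ℝ → ℝ) (τ : ℝ) : Prop :=
  0 < τ ∧ (∀ t, p (t + τ) = p t ∧ q (t + τ) = q t) ∧
    ∀ τ' : ℝ, 0 < τ' → (∀ t, p (t + τ') = p t ∧ q (t + τ') = q t) → τ ≤ τ'

noncomputable def ellipticIntegrand (k θ : ℝ) : ℝ := 1 / √(1 - k ^ 2 * sin θ ^ 2)

/-- Legendre's incomplete elliptic integral of the first kind `F(φ, k)`. -/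
noncomputable def ellipticF (k φ : ℝ) : ℝ := ∫ θ in 0..φ, ellipticIntegrand k θ

noncomputable def ellipticK (k : ℝ) : ℝ := ellipticF k (π / 2)

noncomputable def jacobiAm (k : ℝ) : ℝ → ℝ := invFun (ellipticF k)

noncomputable def jacobiSn (k u : ℝ) : ℝ := sin (jacobiAm k u)

noncomputable def jacobiCn (k u : ℝ) : ℝ := cos (jacobiAm k u)

noncomputable def jacobiDn (k u : ℝ) : ℝ := √(1 - k ^ 2 * jacobiSn k u ^ 2)

section Elliptic

variable {k : ℝ}

lemma one_sub_sq_mul_sin_sq_pos (hk : k ^ 2 < 1) (θ : ℝ) : 0 < 1 - k ^ 2 * sin θ ^ 2 := by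
  nlinarith [sin_sq_le_one θ, sq_nonneg k]

lemma ellipticIntegrand_pos (hk : k ^ 2 < 1) (θ : ℝ) : 0 < ellipticIntegrand k θ :=
  one_div_pos.2 (sqrt_pos.2 (one_sub_sq_mul_sin_sq_pos hk θ))

lemma one_le_ellipticIntegrand (hk : k ^ 2 < 1) (θ : ℝ) : 1 ≤ ellipticIntegrand k θ := by
  rw [ellipticIntegrand, le_div_iff₀ (sqrt_pos.2 (one_sub_sq_mul_sin_sq_pos hk θ)), one_mul]
  exact sqrt_le_one.2 (by nlinarith [sq_nonneg (sin θ), sq_nonneg k])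

lemma continuous_ellipticIntegrand (hk : k ^ 2 < 1) : Continuous (ellipticIntegrand k) :=
  continuous_const.div (by fun_prop) fun θ => (sqrt_pos.2 (one_sub_sq_mul_sin_sq_pos hk θ)).ne'

lemma periodic_ellipticIntegrand : Periodic (ellipticIntegrand k) π := fun θ => by
  simp only [ellipticIntegrand, sin_add_pi, neg_sq]

lemma ellipticIntegrand_pi_sub (θ : ℝ) : ellipticIntegrand k (π - θ) = ellipticIntegrand k θ := by
  simp only [ellipticIntegrand, sin_pi_sub]

@[simp]
lemma ellipticF_zero : ellipticF k 0 = 0 := integral_same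

lemma hasDerivAt_ellipticF (hk : k ^ 2 < 1) (φ : ℝ) :
    HasDerivAt (ellipticF k) (ellipticIntegrand k φ) φ :=
  ((continuous_ellipticIntegrand hk).integral_hasStrictDerivAt 0 φ).hasDerivAt

lemma strictMono_ellipticF (hk : k ^ 2 < 1) : StrictMono (ellipticF k) :=
  strictMono_of_deriv_pos fun φ => (hasDerivAt_ellipticF hk φ).deriv ▸ ellipticIntegrand_pos hk φ

lemma monotone_ellipticF_sub_id (hk : k ^ 2 < 1) : Monotone fun φ => ellipticF k φ - φ := by
  have hF φ := (hasDerivAt_ellipticF hk φ).fun_sub (hasDerivAt_id' φ)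
  exact monotone_of_deriv_nonneg (fun φ => (hF φ).differentiableAt) fun φ => by
    rw [(hF φ).deriv, sub_nonneg]
    exact one_le_ellipticIntegrand hk φ

lemma surjective_ellipticF (hk : k ^ 2 < 1) : Surjective (ellipticF k) := by
  have hmono := monotone_ellipticF_sub_id hk
  refine Continuous.surjective
    (continuous_iff_continuousAt.2 fun φ => (hasDerivAt_ellipticF hk φ).continuousAt) ?_ ?_
  · refine tendsto_atTop_mono' atTop ((eventually_ge_atTop 0).mono fun φ hφ => ?_) tendsto_id
    simpa using hmono hφ
  · refine tendsto_atBot_mono' atBot ((eventually_le_atBot 0).mono fun φ hφ => ?_) tendsto_id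
    simpa using hmono hφ

lemma ellipticF_add_pi (hk : k ^ 2 < 1) (φ : ℝ) :
    ellipticF k (φ + π) = ellipticF k φ + ellipticF k π := by
  simpa only [ellipticF, zero_add] using
    periodic_ellipticIntegrand.intervalIntegral_add_eq_add 0 φ
    fun _ _ => (continuous_ellipticIntegrand hk).intervalIntegrable _ _

lemma ellipticF_pi (hk : k ^ 2 < 1) : ellipticF k π = 2 * ellipticK k := by
  have hint (a b : ℝ) : IntervalIntegrable (ellipticIntegrand k) MeasureTheory.volume a b :=
    (continuous_ellipticIntegrand hk).intervalIntegrable a b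
  have hsymm : ∫ θ in π / 2..π, ellipticIntegrand k θ = ellipticK k := by
    have h := integral_comp_sub_left (ellipticIntegrand k) π (a := 0) (b := π / 2)
    simp only [ellipticIntegrand_pi_sub, sub_zero, show π - π / 2 = π / 2 by ring] at h
    exact h.symm
  rw [ellipticF, ← integral_add_adjacent_intervals (hint 0 (π / 2)) (hint _ π), hsymm]
  simp only [ellipticK, ellipticF]
  ring

lemma ellipticF_two_pi (hk : k ^ 2 < 1) : ellipticF k (2 * π) = 4 * ellipticK k := by
  rw [two_mul, ellipticF_add_pi hk, ellipticF_pi hk]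
  ring

lemma ellipticK_pos (hk : k ^ 2 < 1) : 0 < ellipticK k := by
  simpa [ellipticK] using strictMono_ellipticF hk (half_pos pi_pos)

lemma ellipticF_jacobiAm (hk : k ^ 2 < 1) (u : ℝ) : ellipticF k (jacobiAm k u) = u :=
  invFun_eq (surjective_ellipticF hk u)

lemma jacobiAm_ellipticF (hk : k ^ 2 < 1) (φ : ℝ) : jacobiAm k (ellipticF k φ) = φ :=
  leftInverse_invFun (strictMono_ellipticF hk).injective φ

lemma strictMono_jacobiAm (hk : k ^ 2 < 1) : StrictMono (jacobiAm k) := fun u v huv =>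
  (strictMono_ellipticF hk).lt_iff_lt.1 (by simpa only [ellipticF_jacobiAm hk] using huv)

lemma continuous_jacobiAm (hk : k ^ 2 < 1) : Continuous (jacobiAm k) :=
  (strictMono_jacobiAm hk).monotone.continuous_of_surjective fun φ => ⟨_, jacobiAm_ellipticF hk φ⟩

lemma jacobiAm_zero (hk : k ^ 2 < 1) : jacobiAm k 0 = 0 := by
  simpa using jacobiAm_ellipticF hk 0

lemma jacobiAm_add_two_mul_ellipticK (hk : k ^ 2 < 1) (u : ℝ) :
    jacobiAm k (u + 2 * ellipticK k) = jacobiAm k u + π := by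
  rw [← jacobiAm_ellipticF hk (jacobiAm k u + π), ellipticF_add_pi hk, ellipticF_jacobiAm hk,
    ellipticF_pi hk]

lemma hasDerivAt_jacobiAm (hk : k ^ 2 < 1) (u : ℝ) :
    HasDerivAt (jacobiAm k) (jacobiDn k u) u := by
  simpa [ellipticIntegrand, jacobiDn, jacobiSn] using
    (hasDerivAt_ellipticF hk (jacobiAm k u)).of_local_left_inverse
      (continuous_jacobiAm hk).continuousAt (ellipticIntegrand_pos hk _).ne'
      (.of_forall (ellipticF_jacobiAm hk))

lemma jacobiSn_zero (hk : k ^ 2 < 1) : jacobiSn k 0 = 0 := by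
  simp [jacobiSn, jacobiAm_zero hk]

lemma jacobiCn_zero (hk : k ^ 2 < 1) : jacobiCn k 0 = 1 := by
  simp [jacobiCn, jacobiAm_zero hk]

lemma jacobiDn_zero (hk : k ^ 2 < 1) : jacobiDn k 0 = 1 := by
  simp [jacobiDn, jacobiSn_zero hk]

lemma jacobiDn_pos (hk : k ^ 2 < 1) (u : ℝ) : 0 < jacobiDn k u :=
  sqrt_pos.2 (one_sub_sq_mul_sin_sq_pos hk _)

lemma jacobiDn_sq (hk : k ^ 2 < 1) (u : ℝ) : jacobiDn k u ^ 2 = 1 - k ^ 2 * jacobiSn k u ^ 2 :=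
  sq_sqrt (one_sub_sq_mul_sin_sq_pos hk _).le

lemma hasDerivAt_jacobiSn (hk : k ^ 2 < 1) (u : ℝ) :
    HasDerivAt (jacobiSn k) (jacobiCn k u * jacobiDn k u) u :=
  (hasDerivAt_sin _).comp u (hasDerivAt_jacobiAm hk u)

lemma hasDerivAt_jacobiCn (hk : k ^ 2 < 1) (u : ℝ) :
    HasDerivAt (jacobiCn k) (-jacobiSn k u * jacobiDn k u) u :=
  (hasDerivAt_cos _).comp u (hasDerivAt_jacobiAm hk u)

lemma hasDerivAt_jacobiDn (hk : k ^ 2 < 1) (u : ℝ) :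
    HasDerivAt (jacobiDn k) (-k ^ 2 * jacobiSn k u * jacobiCn k u) u := by
  have h := ((((hasDerivAt_jacobiSn hk u).fun_pow 2).const_mul (k ^ 2)).const_sub 1).sqrt
    (one_sub_sq_mul_sin_sq_pos hk _).ne'
  refine h.congr_deriv ?_
  rw [show √(1 - k ^ 2 * jacobiSn k u ^ 2) = jacobiDn k u from rfl]
  field_simp [(jacobiDn_pos hk u).ne']
  ring

lemma antiperiodic_jacobiSn (hk : k ^ 2 < 1) : Antiperiodic (jacobiSn k) (2 * ellipticK k) :=
  fun u => by simp only [jacobiSn, jacobiAm_add_two_mul_ellipticK hk, sin_add_pi]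

lemma antiperiodic_jacobiCn (hk : k ^ 2 < 1) : Antiperiodic (jacobiCn k) (2 * ellipticK k) :=
  fun u => by simp only [jacobiCn, jacobiAm_add_two_mul_ellipticK hk, cos_add_pi]

lemma periodic_jacobiDn (hk : k ^ 2 < 1) : Periodic (jacobiDn k) (2 * ellipticK k) :=
  fun u => by simp only [jacobiDn, antiperiodic_jacobiSn hk u, neg_sq]

lemma four_mul_ellipticK_le (hk : k ^ 2 < 1) {u : ℝ} (hu : 0 < u) (hcn : jacobiCn k u = 1) :
    4 * ellipticK k ≤ u := by
  obtain ⟨n, hn⟩ := (cos_eq_one_iff _).1 hcn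
  have ham : 0 < jacobiAm k u := jacobiAm_zero hk ▸ strictMono_jacobiAm hk hu
  have hn1 : (1 : ℝ) ≤ n := by
    have : (0 : ℝ) < n := by nlinarith [pi_pos]
    exact_mod_cast Int.cast_pos.1 this
  calc 4 * ellipticK k = ellipticF k (2 * π) := (ellipticF_two_pi hk).symm
    _ ≤ ellipticF k (jacobiAm k u) := (strictMono_ellipticF hk).monotone (by nlinarith [pi_pos])
    _ = u := ellipticF_jacobiAm hk u

end Elliptic

theorem IsNpsSolution.rescale {P Q : ℝ → ℝ} (h : IsNpsSolution 2 2 P Q) {σ : ℝ} (hσ : σ ≠ 0)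
    (μ : ℝ) : IsNpsSolution μ σ (fun t => P (μ / 2 * t)) (fun t => μ / σ * Q (μ / 2 * t)) := by
  intro t
  have hlin : HasDerivAt (fun t => μ / 2 * t) (μ / 2) t := by
    simpa using (hasDerivAt_id t).const_mul (μ / 2)
  obtain ⟨hP, hQ⟩ := h (μ / 2 * t)
  constructor
  · refine (hP.comp t hlin).congr_deriv ?_
    field_simp
  · refine ((hQ.comp t hlin).const_mul (μ / σ)).congr_deriv ?_
    field_simp

theorem IsMinimalPeriod.comp_mul {P Q : ℝ → ℝ} {T : ℝ} (h : IsMinimalPeriod P Q T) {a : ℝ}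
    (ha : 0 < a) {c : ℝ} (hc : c ≠ 0) :
    IsMinimalPeriod (fun t => P (a * t)) (fun t => c * Q (a * t)) (T / a) := by
  obtain ⟨hT, hper, hmin⟩ := h
  refine ⟨div_pos hT ha, fun t => ?_, fun τ hτ hτper => ?_⟩
  · simp only [mul_add, mul_div_cancel₀ _ ha.ne', hper, and_self]
  · rw [div_le_iff₀ ha, mul_comm]
    refine hmin (a * τ) (mul_pos ha hτ) fun s => ?_
    simpa only [mul_add, mul_div_cancel₀ _ ha.ne', mul_right_inj' hc] using hτper (s / a)

theorem isNpsSolution_jacobi {k : ℝ} (hk : k ^ 2 < 1) :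
    IsNpsSolution 2 2 (fun u => k / 2 * (jacobiCn k u / jacobiDn k u))
      (fun u => k * jacobiSn k u) := by
  intro u
  have hd := (jacobiDn_pos hk u).ne'
  constructor
  · refine (((hasDerivAt_jacobiCn hk u).div (hasDerivAt_jacobiDn hk u) hd).const_mul
      (k / 2)).congr_deriv ?_
    field_simp
    ring
  · refine ((hasDerivAt_jacobiSn hk u).const_mul k).congr_deriv ?_
    field_simp
    rw [jacobiDn_sq hk u]

theorem isMinimalPeriod_jacobi {k : ℝ} (hk0 : k ≠ 0) (hk : k ^ 2 < 1) :
    IsMinimalPeriod (fun u => k / 2 * (jacobiCn k u / jacobiDn k u)) (fun u => k * jacobiSn k u)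
      (4 * ellipticK k) := by
  have hP : Antiperiodic (fun u => jacobiCn k u / jacobiDn k u) (2 * ellipticK k) := fun u => by
    simp only [antiperiodic_jacobiCn hk u, periodic_jacobiDn hk u, neg_div]
  have hQ := antiperiodic_jacobiSn hk
  refine ⟨by linarith [ellipticK_pos hk], fun u => ?_, fun τ hτ hτper => ?_⟩
  · rw [show 4 * ellipticK k = 2 * (2 * ellipticK k) by ring]
    exact ⟨congrArg (k / 2 * ·) (hP.periodic_two_mul u),
      congrArg (k * ·) (hQ.periodic_two_mul u)⟩
  obtain ⟨hpτ, hqτ⟩ := hτper 0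
  simp only [zero_add, jacobiSn_zero hk, jacobiCn_zero hk, jacobiDn_zero hk] at hpτ hqτ
  have hsn : jacobiSn k τ = 0 := by simpa [hk0] using hqτ
  have hdn : jacobiDn k τ = 1 := by simp [jacobiDn, hsn]
  refine four_mul_ellipticK_le hk hτ ?_
  simpa [hdn, hk0] using hpτ

theorem period_function_elliptic_formula (μ σ : ℝ) (hμ : 0 < μ) (hσ : 0 < σ)
    (ζ : ℝ) (hζ : ζ ∈ Set.Ioo (0 : ℝ) (1 / 2))
    (K : ℝ → ℝ)
    (hK : ∀ x : ℝ, K x = ∫ θ in (0 : ℝ)..(Real.pi / 2),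
      1 / Real.sqrt (1 - x ^ 2 * Real.sin θ ^ 2)) :
    ∃ p q : ℝ → ℝ,
      IsNpsSolution μ σ p q ∧ p 0 = ζ ∧ q 0 = 0 ∧
      IsMinimalPeriod p q ((8 / μ) * K (2 * ζ)) := by
  obtain ⟨hζ0, hζ1⟩ := hζ
  have hk : (2 * ζ) ^ 2 < 1 := by nlinarith
  refine ⟨_, _, (isNpsSolution_jacobi hk).rescale hσ.ne' μ, ?_, ?_, ?_⟩
  · simp [jacobiCn_zero hk, jacobiDn_zero hk]
  · simp [jacobiSn_zero hk]
  · have h := (isMinimalPeriod_jacobi (by positivity) hk).comp_mul (half_pos hμ)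
      (div_ne_zero hμ.ne' hσ.ne')
    have hKk : K (2 * ζ) = ellipticK (2 * ζ) := hK _
    convert h using 2
    rw [hKk]
    field_simp
    ring
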